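/- arXiv:1207.5366 — 3 statements merged into one kernel-verified Lean document; each statement's English description precedes it below -/
import Mathlib

section
/- The generating function identity 1 + Σ_{n≥1} ζ(2̄,…,2̄ with n copies) x^{2n} = (sinh(πx/2)/(πx/2)) · cos(πx/2) holds as an identity of entire functions of x (equivalently, of formal power series with the stated coefficients). -/
/-!
Writing `a j = (-1)^(j+1) x² / (j+1)²`, the partial products of `∏ (1 + a j)` converge, since
`∑ |a j| < ∞`, to `∑_n e_n`, where `e_n = ∑_{|s| = n} ∏_{j ∈ s} a j`; indexing `s` by the strictly
decreasing tuples `k = j + 1` shows `e_n = ζ(2̄,…,2̄) x^{2n}`. Grouping the factors in pairs,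
`∏_{j < 2N} (1 + a j) = ∏_{m < N} (1 - x²/(2m+1)²) · ∏_{m < N} (1 + (x/2)²/(m+1)²)`, and the two
factors tend to `cos (πx/2)` and `sinh (πx/2) / (πx/2)` by Euler's sine product, evaluated at
`(1 - x)/2` (against Wallis' product) and at `ix/2` respectively.
-/

open scoped Real

/-- The depth-`n` alternating Euler sum `ζ(2̄,…,2̄)`:
the sum over strictly decreasing tuples `k₁ > ⋯ > kₙ ≥ 1` of `∏ (-1)^{kᵢ}/kᵢ²`. -/
noncomputable def zetaBar2 (n : ℕ) : ℝ :=
  ∑' f : {f : Fin n → ℕ // StrictAnti f ∧ ∀ i, 1 ≤ f i},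
    ∏ i, (-1 : ℝ) ^ (f.1 i) / ((f.1 i : ℝ)) ^ 2

open Filter Finset Topology

section Esymm

variable {ι R : Type*}

noncomputable def tsumEsymm [CommSemiring R] [TopologicalSpace R] (a : ι → R) (n : ℕ) : R :=
  ∑' s : {s : Finset ι // s.card = n}, ∏ i ∈ s.1, a i

theorem tsumEsymm_zero [CommSemiring R] [TopologicalSpace R] (a : ι → R) :
    tsumEsymm a 0 = 1 := by
  rw [tsumEsymm, tsum_eq_single ⟨∅, card_empty⟩ fun s hs =>
    (hs (Subtype.ext (card_eq_zero.1 s.2))).elim]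
  exact prod_empty

theorem hasSum_tsumEsymm [NormedCommRing R] [NormOneClass R] [CompleteSpace R] {a : ι → R}
    (ha : Summable (‖a ·‖)) : HasSum (tsumEsymm a) (∏' i, (1 + a i)) := by
  have h := summable_finsetProd_of_summable_norm ha
  rw [tprod_one_add h]
  exact h.hasSum.tsum_fiberwise Finset.card

end Esymm

def strictAntiEquivFinsetCard (α : Type*) [LinearOrder α] (n : ℕ) :
    {f : Fin n → α // StrictAnti f} ≃ {s : Finset α // s.card = n} where
  toFun f := ⟨univ.image f.1, by rw [card_image_of_injective _ f.2.injective, card_fin]⟩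
  invFun s := ⟨fun i => s.1.orderEmbOfFin s.2 i.rev,
    fun _ _ h => (s.1.orderEmbOfFin s.2).strictMono (Fin.rev_lt_rev.2 h)⟩
  left_inv f := by
    have h := orderEmbOfFin_unique (f := fun i => f.1 i.rev)
      (by rw [card_image_of_injective _ f.2.injective, card_fin])
      (fun i => mem_image_of_mem _ (mem_univ _)) (StrictAnti.comp f.2 Fin.rev_strictAnti)
    ext i
    simpa using (congrFun h i.rev).symm
  right_inv s := by
    ext a
    simp only [mem_image, mem_univ, true_and]
    rw [← Fin.rev_surjective.exists (p := fun i => s.1.orderEmbOfFin s.2 i = a),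
      ← Set.mem_range, range_orderEmbOfFin, mem_coe]

def strictAntiPosEquiv (n : ℕ) :
    {f : Fin n → ℕ // StrictAnti f ∧ ∀ i, 1 ≤ f i} ≃ {f : Fin n → ℕ // StrictAnti f} where
  toFun f := ⟨fun i => f.1 i - 1, fun i j h => by
    have := f.2.1 h; have := f.2.2 j; dsimp only; omega⟩
  invFun g := ⟨fun i => g.1 i + 1, fun i j h => by simpa using g.2 h,
    fun _ => Nat.le_add_left 1 _⟩
  left_inv f := by ext i; have := f.2.2 i; simp only; omega
  right_inv g := by ext i; simp

noncomputable def alternatingTerm (x : ℝ) (j : ℕ) : ℝ :=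
  (-1) ^ (j + 1) / ((j + 1 : ℕ) : ℝ) ^ 2 * x ^ 2

theorem summable_norm_alternatingTerm (x : ℝ) : Summable (‖alternatingTerm x ·‖) := by
  have h := ((summable_nat_add_iff 1).2
    (Real.summable_one_div_nat_pow.2 one_lt_two)).mul_right (x ^ 2)
  refine h.congr fun j => ?_
  simp [alternatingTerm]

theorem tsumEsymm_alternatingTerm (x : ℝ) (n : ℕ) :
    tsumEsymm (alternatingTerm x) n = zetaBar2 n * x ^ (2 * n) := by
  rw [tsumEsymm, ← ((strictAntiPosEquiv n).trans (strictAntiEquivFinsetCard ℕ n)).tsum_eq,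
    zetaBar2, ← tsum_mul_right]
  refine tsum_congr fun f => ?_
  have hf : Function.Injective fun i => f.1 i - 1 := ((strictAntiPosEquiv n) f).2.injective
  have hterm (i : Fin n) :
      alternatingTerm x (f.1 i - 1) = (-1) ^ (f.1 i) / ((f.1 i : ℕ) : ℝ) ^ 2 * x ^ 2 := by
    rw [alternatingTerm, Nat.sub_add_cancel (f.2.2 i)]
  simp only [Equiv.trans_apply, strictAntiEquivFinsetCard, Equiv.coe_fn_mk, strictAntiPosEquiv]
  rw [prod_image fun i _ j _ h => hf h]
  simp only [hterm, prod_mul_distrib, prod_const, card_univ, Fintype.card_fin, pow_mul]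

theorem prod_range_two_mul_one_add_alternatingTerm (x : ℝ) (N : ℕ) :
    ∏ j ∈ range (2 * N), (1 + alternatingTerm x j) =
      (∏ m ∈ range N, (1 - x ^ 2 / (2 * (m : ℝ) + 1) ^ 2)) *
        ∏ m ∈ range N, (1 + (x / 2) ^ 2 / ((m : ℝ) + 1) ^ 2) := by
  induction N with
  | zero => simp
  | succ N ih =>
    have hodd : alternatingTerm x (2 * N) = -(x ^ 2 / (2 * (N : ℝ) + 1) ^ 2) := by
      rw [alternatingTerm, Odd.neg_one_pow ⟨N, rfl⟩]; push_cast; ring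
    have heven : alternatingTerm x (2 * N + 1) = (x / 2) ^ 2 / ((N : ℝ) + 1) ^ 2 := by
      rw [alternatingTerm, Even.neg_one_pow ⟨N + 1, by ring⟩]; push_cast; field_simp; ring
    rw [mul_add_one, prod_range_succ, prod_range_succ, ih, hodd, heven, prod_range_succ,
      prod_range_succ]
    ring

theorem Real.tendsto_euler_sinh_prod (x : ℝ) :
    Tendsto (fun n => π * x * ∏ j ∈ range n, (1 + x ^ 2 / ((j : ℝ) + 1) ^ 2)) atTop
      (𝓝 (Real.sinh (π * x))) := by
  have hsin : Complex.sin (π * (x * Complex.I)) = Real.sinh (π * x) * Complex.I := by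
    rw [← mul_assoc, Complex.sin_mul_I, Complex.ofReal_sinh]; push_cast; rfl
  have hseq (n : ℕ) :
      π * (x * Complex.I) * ∏ j ∈ range n, (1 - (x * Complex.I) ^ 2 / ((j : ℂ) + 1) ^ 2) =
        ((π * x * ∏ j ∈ range n, (1 + x ^ 2 / ((j : ℝ) + 1) ^ 2) : ℝ) : ℂ) * Complex.I := by
    push_cast; rw [mul_pow, Complex.I_sq]; ring_nf
  have h := Complex.tendsto_euler_sin_prod (x * Complex.I)
  rw [hsin, funext hseq] at h
  simpa only [Function.comp_def, Complex.mul_I_im, Complex.ofReal_re]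
    using (Complex.continuous_im.tendsto _).comp h

/-- At `z = (1 - x)/2`, `1 - z²/(j+1)² = (2j+1+x)(2j+3-x)/(2j+2)²`; compared with
`1 - x²/(2j+1)² = (2j+1+x)(2j+1-x)/(2j+1)²` the factor `2j+1-x` is shifted by one index, which
telescopes, and the remaining quotients of even and odd numbers form Wallis' product. -/
theorem euler_sin_prod_half_one_sub_mul_wallis (x : ℝ) (N : ℕ) :
    (1 - x) * (∏ j ∈ range N, (1 - ((1 - x) / 2) ^ 2 / ((j : ℝ) + 1) ^ 2)) *
        ∏ i ∈ range N, (2 * (i : ℝ) + 2) / (2 * i + 1) * ((2 * i + 2) / (2 * i + 3)) =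
      (1 - x / (2 * N + 1)) * ∏ j ∈ range N, (1 - x ^ 2 / (2 * (j : ℝ) + 1) ^ 2) := by
  induction N with
  | zero => simp
  | succ N ih =>
    simp only [prod_range_succ]
    have h1 : (2 * (N : ℝ) + 1) ≠ 0 := by positivity
    have h3 : (2 * (N : ℝ) + 3) ≠ 0 := by positivity
    calc _ = ((1 - x) * (∏ j ∈ range N, (1 - ((1 - x) / 2) ^ 2 / ((j : ℝ) + 1) ^ 2)) *
        ∏ i ∈ range N, (2 * (i : ℝ) + 2) / (2 * i + 1) * ((2 * i + 2) / (2 * i + 3))) *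
          ((1 - ((1 - x) / 2) ^ 2 / ((N : ℝ) + 1) ^ 2) *
            ((2 * (N : ℝ) + 2) / (2 * N + 1) * ((2 * N + 2) / (2 * N + 3)))) := by ring
      _ = _ := by rw [ih]; push_cast; field_simp; ring

theorem Real.tendsto_euler_cos_prod (x : ℝ) :
    Tendsto (fun n => ∏ j ∈ range n, (1 - x ^ 2 / (2 * (j : ℝ) + 1) ^ 2)) atTop
      (𝓝 (Real.cos (π * x / 2))) := by
  have hsin := (Real.tendsto_euler_sin_prod ((1 - x) / 2)).mul Real.tendsto_prod_pi_div_two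
  rw [show π * ((1 - x) / 2) = π / 2 - π * x / 2 by ring, Real.sin_pi_div_two_sub] at hsin
  have hlhs := hsin.const_mul (2 / π)
  rw [show 2 / π * (Real.cos (π * x / 2) * (π / 2)) = Real.cos (π * x / 2) by
    field_simp [Real.pi_ne_zero]] at hlhs
  have hcorr : Tendsto (fun n : ℕ => 1 - x / (2 * (n : ℝ) + 1)) atTop (𝓝 1) := by
    simpa using (tendsto_const_nhds.div_atTop ((tendsto_natCast_atTop_atTop (R := ℝ))
      |>.const_mul_atTop two_pos |>.atTop_add tendsto_const_nhds)).const_sub 1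
  have hprod : Tendsto (fun n : ℕ => (1 - x / (2 * (n : ℝ) + 1)) *
      ∏ j ∈ range n, (1 - x ^ 2 / (2 * (j : ℝ) + 1) ^ 2)) atTop (𝓝 (Real.cos (π * x / 2))) := by
    refine hlhs.congr fun n => ?_
    rw [← euler_sin_prod_half_one_sub_mul_wallis]
    field_simp [Real.pi_ne_zero]
  simpa using (hprod.div hcorr one_ne_zero).congr' <|
    (hcorr.eventually_ne one_ne_zero).mono fun n hn => mul_div_cancel_left₀ _ hn

/-- Generating function identity
`1 + Σ_{n≥1} ζ(2̄,…,2̄) x^{2n} = (sinh(πx/2)/(πx/2))·cos(πx/2)`,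
stated with both sides multiplied by `πx/2` so that it is an identity of
entire functions of the real variable `x`. -/
theorem zetaBar2_genFun (x : ℝ) :
    (π * x / 2) * (1 + ∑' n : ℕ, zetaBar2 (n + 1) * x ^ (2 * (n + 1))) =
      Real.sinh (π * x / 2) * Real.cos (π * x / 2) := by
  have hsum := hasSum_tsumEsymm (summable_norm_alternatingTerm x)
  have hprod : 1 + ∑' n : ℕ, zetaBar2 (n + 1) * x ^ (2 * (n + 1)) =
      ∏' j, (1 + alternatingTerm x j) := by
    rw [← hsum.tsum_eq, hsum.summable.tsum_eq_zero_add, tsumEsymm_zero]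
    simp only [tsumEsymm_alternatingTerm]
  have hpartial :=
    (multipliable_one_add_of_summable (summable_norm_alternatingTerm x)).hasProd.tendsto_prod_nat
  have heven := (hpartial.comp (tendsto_id.const_mul_atTop' two_pos)).const_mul (π * x / 2)
  have hsplit := (Real.tendsto_euler_cos_prod x).mul (Real.tendsto_euler_sinh_prod (x / 2))
  rw [hprod, tendsto_nhds_unique heven (hsplit.congr fun N => ?_), mul_div_assoc, mul_comm]
  simp only [Function.comp_apply, id, prod_range_two_mul_one_add_alternatingTerm]
  ring
end

section
/- For every positive integer n ≥ 2, Σ_{j=1}^{n-1} ζ(2j)ζ(2̄(n-j)) = (1/2)ζ(2n) + n·ζ(2̄n). -/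
/-- The Riemann zeta value `ζ(m) = Σ_{j ≥ 1} 1/j^m`. -/
noncomputable def zetaVal (m : ℕ) : ℝ := ∑' k : ℕ, 1 / ((k : ℝ) + 1) ^ m

/-- The alternating zeta value `ζ(m̄) = Σ_{j ≥ 1} (-1)^j/j^m`. -/
noncomputable def zetaAlt (m : ℕ) : ℝ := ∑' k : ℕ, (-1 : ℝ) ^ (k + 1) / ((k : ℝ) + 1) ^ m

/-!
Expand each product `ζ(2j) ζ(2̄(n-j))` as a double series over `(k, l)` and sum the finite
geometric series in `j` first. Writing `a = (k+1)²` and `b = (l+1)²`, the term is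
`(n-1)(-1)^(k+1)/a^n` on the diagonal and `(-1)^(l+1) (b^(1-n) - a^(1-n)) / (a - b)` off it.
The two off-diagonal pieces are absolutely summable, so each can be summed first over the index
whose square occurs only in the denominator `a - b`. With `K = k + 1` and `L = l + 1`, telescoping the
partial fractions `2L/(K² - L²) = 1/(K - L) - 1/(K + L)` gives, for `ε = ±1`,
`Σ_{k ≠ l} ε^k / ((k+1)² - (l+1)²) = (ε^l + 2ε) / (4(l+1)²)`,
so the two pieces contribute `(3/4) ζ(2̄n)` and `(1/2) ζ(2n) + (1/4) ζ(2̄n)`, which together with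
the diagonal `(n-1) ζ(2̄n)` give the claim.
-/

open Filter Finset Topology

lemma sum_range_sub_add {E : Type*} [AddCommGroup E] (b : ℕ → E) (c N : ℕ) :
    ∑ k ∈ range N, (b k - b (k + c)) = ∑ i ∈ range c, b i - ∑ i ∈ range c, b (N + i) := by
  have h₁ := sum_range_add b N c
  have h₂ := sum_range_add b c N
  rw [add_comm N c] at h₁
  simp only [sum_sub_distrib, add_comm _ c]
  exact sub_eq_sub_iff_add_eq_add.mpr (h₁.symm.trans h₂)

lemma hasSum_sub_add {E : Type*} [AddCommGroup E] [TopologicalSpace E] [IsTopologicalAddGroup E]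
    [T2Space E] {b : ℕ → E} (c : ℕ) (hs : Summable fun k => b k - b (k + c))
    (hb : Tendsto b atTop (𝓝 0)) :
    HasSum (fun k => b k - b (k + c)) (∑ i ∈ range c, b i) := by
  have htail : Tendsto (fun N => ∑ i ∈ range c, b (N + i)) atTop (𝓝 0) := by
    simpa using tendsto_finsetSum (range c) fun i _ => hb.comp (tendsto_add_atTop_nat i)
  have hpartial := hs.hasSum.tendsto_sum_nat
  simp only [sum_range_sub_add] at hpartial
  convert hs.hasSum
  exact tendsto_nhds_unique (by simpa using tendsto_const_nhds.sub htail) hpartial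

lemma Summable.hasSum_of_prod_fiberwise {α β γ : Type*} [AddCommMonoid α] [TopologicalSpace α]
    [ContinuousAdd α] [T3Space α] {f : β × γ → α} {g : β → α} {a : α} (hf : Summable f)
    (hfib : ∀ b, HasSum (fun c => f (b, c)) (g b)) (hg : HasSum g a) : HasSum f a :=
  (hf.hasSum.prod_fiberwise hfib).unique hg ▸ hf.hasSum

lemma hasSum_ite_fst_eq_snd {α β : Type*} [AddCommMonoid α] [TopologicalSpace α] [DecidableEq β]
    {f : β → α} {a : α} (hf : HasSum f a) :
    HasSum (fun p : β × β => if p.1 = p.2 then f p.1 else 0) a := by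
  refine (Function.Injective.hasSum_iff (g := fun b => (b, b)) (fun b c h => congrArg Prod.fst h)
    fun p hp => if_neg fun h => hp ⟨p.1, Prod.ext rfl h⟩).mp ?_
  simpa [Function.comp_def] using hf

lemma sum_Ico_pow_mul_pow_mul_sub {R : Type*} [CommRing R] (x y : R) (n : ℕ) :
    (∑ j ∈ Ico 1 n, x ^ j * y ^ (n - j)) * (x - y) = x * y * (x ^ (n - 1) - y ^ (n - 1)) := by
  rcases n with _ | n
  · simp
  have hterm : ∀ k ∈ range n,
      x ^ (1 + k) * y ^ (n + 1 - (1 + k)) = x * y * (x ^ k * y ^ (n - 1 - k)) := by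
    intro k hk
    rw [show n + 1 - (1 + k) = n - 1 - k + 1 by simp at hk; omega]
    ring
  rw [sum_Ico_eq_sum_range, Nat.add_sub_cancel, sum_congr rfl hterm, ← mul_sum, mul_assoc,
    geom_sum₂_mul]

lemma sum_Ico_inv_pow_mul_inv_pow {a b : ℝ} (ha : a ≠ 0) (hb : b ≠ 0) {n : ℕ} (hn : 1 ≤ n) :
    ∑ j ∈ Ico 1 n, a⁻¹ ^ j * b⁻¹ ^ (n - j) =
      (if a = b then ((n : ℝ) - 1) * a⁻¹ ^ n else 0) +
        (b⁻¹ ^ (n - 1) - a⁻¹ ^ (n - 1)) / (a - b) := by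
  by_cases hab : a = b
  · subst hab
    have hpow : ∀ j ∈ Ico 1 n, a⁻¹ ^ j * a⁻¹ ^ (n - j) = a⁻¹ ^ n := fun j hj => by
      rw [← pow_add, Nat.add_sub_cancel' (mem_Ico.mp hj).2.le]
    rw [sum_congr rfl hpow]
    simp [Nat.cast_sub hn]
  · have hgeom := sum_Ico_pow_mul_pow_mul_sub a⁻¹ b⁻¹ n
    rw [if_neg hab, zero_add, eq_div_iff (sub_ne_zero.mpr hab)]
    set S := ∑ j ∈ Ico 1 n, a⁻¹ ^ j * b⁻¹ ^ (n - j)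
    field_simp at hgeom ⊢
    linear_combination -hgeom

lemma summable_one_div_natCast_add_one_pow {m : ℕ} (hm : 1 < m) :
    Summable fun k : ℕ => 1 / ((k : ℝ) + 1) ^ m := by
  simpa using (summable_nat_add_iff 1).mpr (Real.summable_one_div_nat_pow.mpr hm)

lemma summable_one_div_natCast_sub_sq (l : ℕ) :
    Summable fun k : ℕ => 1 / ((k : ℝ) - l) ^ 2 := by
  have hinj : Function.Injective fun k : ℕ => (k : ℤ) - l := fun a b h => by simpa using h
  exact ((Real.summable_one_div_int_pow.mpr one_lt_two).comp_injective hinj).congr fun k => by simp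

lemma summable_one_div_sq_mul_one_div_sub_sq :
    Summable fun p : ℕ × ℕ => 1 / ((p.1 : ℝ) + 1) ^ 2 * (1 / ((p.2 : ℝ) - p.1) ^ 2) := by
  have hprod := (summable_one_div_natCast_add_one_pow one_lt_two).mul_of_nonneg
    (Real.summable_one_div_int_pow.mpr one_lt_two) (fun _ => by positivity)
    (fun _ => by positivity)
  have hinj : Function.Injective fun p : ℕ × ℕ => (p.1, (p.2 : ℤ) - p.1) := by
    rintro ⟨a, b⟩ ⟨c, d⟩ h
    simp only [Prod.mk.injEq] at h
    obtain ⟨rfl, h⟩ := h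
    simp_all
  exact (hprod.comp_injective hinj).congr fun p => by simp

lemma abs_one_div_sq_sub_sq_le (k l : ℕ) :
    |1 / (((k : ℝ) + 1) ^ 2 - ((l : ℝ) + 1) ^ 2)| ≤ 1 / ((k : ℝ) - l) ^ 2 := by
  rw [show ((k : ℝ) + 1) ^ 2 - ((l : ℝ) + 1) ^ 2 = ((k : ℝ) - l) * (k + l + 2) by ring,
    abs_div, abs_one, abs_mul, abs_of_pos (by positivity : (0 : ℝ) < k + l + 2)]
  rcases eq_or_ne ((k : ℝ) - l) 0 with h | h
  · simp [h]
  · apply one_div_le_one_div_of_le (by positivity)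
    rw [← sq_abs, sq]
    gcongr
    exact (abs_sub _ _).trans (by simp)

lemma tendsto_pow_div_natCast_sub_atTop {ε : ℝ} (hε : |ε| ≤ 1) (l : ℕ) :
    Tendsto (fun k : ℕ => ε ^ k / ((k : ℝ) - l)) atTop (𝓝 0) := by
  have hinv : Tendsto (fun k : ℕ => ((k : ℝ) - l)⁻¹) atTop (𝓝 0) :=
    tendsto_inv_atTop_zero.comp (tendsto_atTop_add_const_right _ _ tendsto_natCast_atTop_atTop)
  refine squeeze_zero_norm (fun k => ?_) (tendsto_zero_iff_norm_tendsto_zero.mp hinv)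
  rw [norm_div, norm_pow, div_eq_mul_inv, norm_inv]
  exact mul_le_of_le_one_left (by positivity) (pow_le_one₀ (norm_nonneg _) hε)

lemma sum_range_pow_div_natCast_sub {ε : ℝ} (hε : ε ^ 2 = 1) (l : ℕ) :
    ∑ i ∈ range (2 * l + 2), ε ^ i / ((i : ℝ) - l) = ε / ((l : ℝ) + 1) := by
  have hpow_even (i : ℕ) : ε ^ (2 * i) = 1 := by rw [pow_mul, hε, one_pow]
  -- the terms `i` and `2l - i` cancel, leaving only `i = 2l + 1`
  have hodd : ∀ i ∈ range (2 * l + 1),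
      ε ^ (2 * l + 1 - 1 - i) / (((2 * l + 1 - 1 - i : ℕ) : ℝ) - l) = -(ε ^ i / ((i : ℝ) - l)) := by
    intro i hi
    have hi : i ≤ 2 * l := by simpa [Nat.lt_succ_iff] using hi
    have hcast : ((2 * l + 1 - 1 - i : ℕ) : ℝ) - l = -((i : ℝ) - l) := by
      rw [show 2 * l + 1 - 1 - i = 2 * l - i by omega, Nat.cast_sub hi]
      push_cast
      ring
    have hsign : ε ^ (2 * l + 1 - 1 - i) = ε ^ i := by
      rw [← mul_one (ε ^ (2 * l + 1 - 1 - i)), ← hpow_even i, ← pow_add,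
        show 2 * l + 1 - 1 - i + 2 * i = 2 * l + i by omega, pow_add, hpow_even, one_mul]
    rw [hcast, hsign, div_neg]
  have hanti := sum_range_reflect (fun i => ε ^ i / ((i : ℝ) - l)) (2 * l + 1)
  rw [sum_congr rfl hodd, sum_neg_distrib, neg_eq_iff_add_eq_zero, add_self_eq_zero] at hanti
  rw [sum_range_succ, hanti, zero_add, pow_succ, hpow_even, one_mul]
  push_cast
  ring

/-- The term `k = l` is `0` by division by zero, so this is the sum over `k ≠ l`. -/
lemma hasSum_pow_div_sq_sub_sq {ε : ℝ} (hε : ε ^ 2 = 1) (l : ℕ) :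
    HasSum (fun k : ℕ => ε ^ k / (((k : ℝ) + 1) ^ 2 - ((l : ℝ) + 1) ^ 2))
      ((ε ^ l + 2 * ε) / (4 * ((l : ℝ) + 1) ^ 2)) := by
  set L : ℝ := (l : ℝ) + 1 with hL
  have hL0 : L ≠ 0 := by positivity
  have habs : |ε| = 1 :=
    (pow_eq_one_iff_of_nonneg (abs_nonneg ε) two_ne_zero).mp (by rw [sq_abs, hε])
  set b : ℕ → ℝ := fun k => ε ^ k / ((k : ℝ) - l)
  -- the `if` restores the term `k = l`, which `b l = 0` (division by zero) drops
  have hpartial (k : ℕ) : ε ^ k / (((k : ℝ) + 1) ^ 2 - L ^ 2) =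
      ((b k - b (k + (2 * l + 2))) + if k = l then ε ^ l / (2 * L) else 0) / (2 * L) := by
    have hshift : ε ^ (k + (2 * l + 2)) = ε ^ k := by
      rw [pow_add, show 2 * l + 2 = 2 * (l + 1) by ring, pow_mul, hε, one_pow, mul_one]
    by_cases hk : k = l
    · subst hk
      simp only [b, hshift, sub_self, div_zero, if_true, hL]
      push_cast
      field_simp
      ring
    · have hkl : (k : ℝ) - l ≠ 0 := sub_ne_zero.mpr (by exact_mod_cast hk)
      have hkl' : (k : ℝ) + l + 2 ≠ 0 := by positivity
      have hcast : ((k + (2 * l + 2) : ℕ) : ℝ) - l = k + l + 2 := by push_cast; ring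
      rw [hL, show ((k : ℝ) + 1) ^ 2 - (l + 1) ^ 2 = ((k : ℝ) - l) * (k + l + 2) by ring]
      simp only [b, hshift, hcast, if_neg hk, add_zero]
      field_simp
      ring
  have hsummable : Summable fun k : ℕ => ε ^ k / (((k : ℝ) + 1) ^ 2 - L ^ 2) := by
    refine (summable_one_div_natCast_sub_sq l).of_norm_bounded fun k => ?_
    simpa [abs_div, habs, hL] using abs_one_div_sq_sub_sq_le k l
  have htelescoping : Summable fun k => b k - b (k + (2 * l + 2)) := by
    refine ((hsummable.mul_left (2 * L)).sub (hasSum_ite_eq l (ε ^ l / (2 * L))).summable).congr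
      fun k => ?_
    rw [hpartial]
    field_simp
    ring
  have hval : (ε ^ l + 2 * ε) / (4 * L ^ 2) = (ε / L + ε ^ l / (2 * L)) / (2 * L) := by
    field_simp
    ring
  rw [hval, ← sum_range_pow_div_natCast_sub hε l]
  exact (((hasSum_sub_add _ htelescoping (tendsto_pow_div_natCast_sub_atTop habs.le l)).add
    (hasSum_ite_eq l _)).div_const (2 * L)).congr_fun hpartial

lemma hasSum_zetaVal_two_mul {j : ℕ} (hj : 1 ≤ j) :
    HasSum (fun k : ℕ => (((k : ℝ) + 1) ^ 2)⁻¹ ^ j) (zetaVal (2 * j)) := by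
  have hterm : (fun k : ℕ => 1 / ((k : ℝ) + 1) ^ (2 * j)) =
      fun k : ℕ => (((k : ℝ) + 1) ^ 2)⁻¹ ^ j := by
    funext k
    rw [one_div, pow_mul, inv_pow]
  rw [zetaVal, hterm, ← hterm]
  exact (summable_one_div_natCast_add_one_pow (by omega)).hasSum

lemma hasSum_zetaAlt_two_mul {j : ℕ} (hj : 1 ≤ j) :
    HasSum (fun k : ℕ => (-1 : ℝ) ^ (k + 1) * (((k : ℝ) + 1) ^ 2)⁻¹ ^ j) (zetaAlt (2 * j)) := by
  have hterm : (fun k : ℕ => (-1 : ℝ) ^ (k + 1) / ((k : ℝ) + 1) ^ (2 * j)) =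
      fun k : ℕ => (-1 : ℝ) ^ (k + 1) * (((k : ℝ) + 1) ^ 2)⁻¹ ^ j := by
    funext k
    rw [div_eq_mul_inv, pow_mul, inv_pow]
  rw [zetaAlt, hterm, ← hterm]
  refine ((summable_one_div_natCast_add_one_pow (m := 2 * j) (by omega)).of_norm_bounded
    fun k => ?_).hasSum
  rw [norm_div, norm_pow, norm_pow, norm_neg, norm_one, one_pow,
    Real.norm_of_nonneg (by positivity)]

lemma hasSum_zetaVal_mul_zetaAlt {i j : ℕ} (hi : 1 ≤ i) (hj : 1 ≤ j) :
    HasSum (fun p : ℕ × ℕ => (((p.1 : ℝ) + 1) ^ 2)⁻¹ ^ i *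
      ((-1) ^ (p.2 + 1) * (((p.2 : ℝ) + 1) ^ 2)⁻¹ ^ j)) (zetaVal (2 * i) * zetaAlt (2 * j)) := by
  have hval := hasSum_zetaVal_two_mul hi
  have halt := hasSum_zetaAlt_two_mul hj
  have hval_norm := hval.summable.norm
  have halt_norm := halt.summable.norm
  rw [← hval.tsum_eq, ← halt.tsum_eq, tsum_mul_tsum_of_summable_norm hval_norm halt_norm]
  exact (summable_mul_of_summable_norm hval_norm halt_norm).hasSum

lemma summable_pow_mul_div_sq_sub_sq {c : ℕ × ℕ → ℝ} (hc : ∀ p, |c p| ≤ 1) {e : ℕ}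
    (he : e ≠ 0) :
    Summable fun p : ℕ × ℕ =>
      (((p.1 : ℝ) + 1) ^ 2)⁻¹ ^ e * (c p / (((p.2 : ℝ) + 1) ^ 2 - ((p.1 : ℝ) + 1) ^ 2)) := by
  refine summable_one_div_sq_mul_one_div_sub_sq.of_norm_bounded fun p => ?_
  have hx : (((p.1 : ℝ) + 1) ^ 2)⁻¹ ^ e ≤ 1 / ((p.1 : ℝ) + 1) ^ 2 := by
    rw [one_div]
    refine pow_le_of_le_one (by positivity) (inv_le_one_of_one_le₀ (one_le_pow₀ ?_)) he
    simp
  have hd := abs_one_div_sq_sub_sq_le p.2 p.1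
  rw [abs_one_div, one_div] at hd
  rw [Real.norm_eq_abs, abs_mul, abs_div, abs_of_nonneg (by positivity), div_eq_mul_inv]
  exact mul_le_mul hx ((mul_le_of_le_one_left (by positivity) (hc p)).trans hd)
    (by positivity) (by positivity)

lemma hasSum_pow_mul_neg_one_pow_div_sq_sub_sq {e : ℕ} (he : e ≠ 0) :
    HasSum (fun p : ℕ × ℕ => (((p.1 : ℝ) + 1) ^ 2)⁻¹ ^ e *
        ((-1) ^ p.2 / (((p.2 : ℝ) + 1) ^ 2 - ((p.1 : ℝ) + 1) ^ 2)))
      (-1 / 4 * zetaAlt (2 * (e + 1)) + -1 / 2 * zetaVal (2 * (e + 1))) := by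
  refine (summable_pow_mul_div_sq_sub_sq (c := fun p => (-1) ^ p.2) (fun p => by simp) he)
    |>.hasSum_of_prod_fiberwise
      (fun k => (hasSum_pow_div_sq_sub_sq neg_one_sq k).mul_left ((((k : ℝ) + 1) ^ 2)⁻¹ ^ e)) ?_
  refine (((hasSum_zetaAlt_two_mul (j := e + 1) (by omega)).mul_left (-1 / 4)).add
    ((hasSum_zetaVal_two_mul (j := e + 1) (by omega)).mul_left (-1 / 2))).congr_fun fun k => ?_
  generalize ((k : ℝ) + 1) ^ 2 = q
  ring

lemma hasSum_neg_one_pow_mul_pow_div_sq_sub_sq {e : ℕ} (he : e ≠ 0) :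
    HasSum (fun p : ℕ × ℕ => (-1) ^ (p.2 + 1) * (((p.2 : ℝ) + 1) ^ 2)⁻¹ ^ e /
        (((p.1 : ℝ) + 1) ^ 2 - ((p.2 : ℝ) + 1) ^ 2))
      (3 / 4 * zetaAlt (2 * (e + 1))) := by
  rw [← (Equiv.prodComm ℕ ℕ).hasSum_iff]
  have hsummable := summable_pow_mul_div_sq_sub_sq (c := fun p => (-1) ^ (p.1 + 1))
    (fun p => by simp) he
  refine (hsummable.congr fun p => ?_).hasSum_of_prod_fiberwise
    (fun l => ((hasSum_pow_div_sq_sub_sq (one_pow 2) l).mul_left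
      ((-1) ^ (l + 1) * (((l : ℝ) + 1) ^ 2)⁻¹ ^ e)).congr_fun fun k => ?_)
    (((hasSum_zetaAlt_two_mul (j := e + 1) (by omega)).mul_left (3 / 4)).congr_fun fun l => ?_)
  · simp only [Equiv.prodComm_apply, Prod.fst_swap, Prod.snd_swap, Function.comp_apply]
    ring
  · simp only [Equiv.prodComm_apply, Prod.swap_prod_mk, Function.comp_apply]
    ring
  · generalize ((l : ℝ) + 1) ^ 2 = q
    ring

lemma sum_Ico_pow_mul_neg_one_pow_mul_pow {n : ℕ} (hn : 1 ≤ n) (k l : ℕ) :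
    ∑ j ∈ Ico 1 n, (((k : ℝ) + 1) ^ 2)⁻¹ ^ j * ((-1) ^ (l + 1) * (((l : ℝ) + 1) ^ 2)⁻¹ ^ (n - j)) =
      (if k = l then ((n : ℝ) - 1) * ((-1) ^ (k + 1) * (((k : ℝ) + 1) ^ 2)⁻¹ ^ n) else 0) +
      (-1) ^ (l + 1) * (((l : ℝ) + 1) ^ 2)⁻¹ ^ (n - 1) / (((k : ℝ) + 1) ^ 2 - ((l : ℝ) + 1) ^ 2) -
      (((k : ℝ) + 1) ^ 2)⁻¹ ^ (n - 1) *
        ((-1) ^ l / (((l : ℝ) + 1) ^ 2 - ((k : ℝ) + 1) ^ 2)) := by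
  have hsq_inj : ((k : ℝ) + 1) ^ 2 = ((l : ℝ) + 1) ^ 2 ↔ k = l := by
    rw [sq_eq_sq₀ (by positivity) (by positivity)]
    simp
  set a := ((k : ℝ) + 1) ^ 2
  set b := ((l : ℝ) + 1) ^ 2
  have hfactor : ∑ j ∈ Ico 1 n, a⁻¹ ^ j * ((-1) ^ (l + 1) * b⁻¹ ^ (n - j)) =
      (-1) ^ (l + 1) * ∑ j ∈ Ico 1 n, a⁻¹ ^ j * b⁻¹ ^ (n - j) := by
    rw [mul_sum]
    exact sum_congr rfl fun _ _ => by ring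
  rw [hfactor, sum_Ico_inv_pow_mul_inv_pow (by positivity) (by positivity) hn, ← neg_sub a,
    div_neg]
  simp only [hsq_inj]
  split_ifs with hkl
  · subst hkl
    rw [show b = a from rfl]
    simp only [sub_self, div_zero]
    ring
  · ring

theorem A1_weight0 (n : ℕ) (hn : 2 ≤ n) :
    ∑ j ∈ Finset.Ico 1 n, zetaVal (2 * j) * zetaAlt (2 * (n - j)) =
      (1 / 2) * zetaVal (2 * n) + (n : ℝ) * zetaAlt (2 * n) := by
  have hproduct := hasSum_sum (s := Ico 1 n) fun j hj =>
    hasSum_zetaVal_mul_zetaAlt (mem_Ico.mp hj).1 (Nat.sub_pos_of_lt (mem_Ico.mp hj).2)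
  have hdiagonal := hasSum_ite_fst_eq_snd
    ((hasSum_zetaAlt_two_mul (j := n) (by omega)).mul_left ((n : ℝ) - 1))
  have hsplit := (hdiagonal.add (hasSum_neg_one_pow_mul_pow_div_sq_sub_sq (e := n - 1)
    (by omega))).sub (hasSum_pow_mul_neg_one_pow_div_sq_sub_sq (e := n - 1) (by omega))
  rw [Nat.sub_add_cancel (by omega)] at hsplit
  rw [hproduct.unique (hsplit.congr_fun fun p =>
    sum_Ico_pow_mul_neg_one_pow_mul_pow (by omega) p.1 p.2)]
  ring
end

section
/- For every positive integer n ≥ 2, Σ_{j=1}^{n-1} j²·ζ(2j)ζ(2n-2j) = (n(8n²+6n+1)/24)ζ(2n) − ((2n-3)/2)ζ(2)ζ(2n-2). -/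
/-!
Writing `z k = ζ(2k)` and `Z = Σ_{k ≥ 1} z k Xᵏ`, Euler's relation
`Σ_{0<k<m} z k z (m-k) = (m + 1/2) z m` (m ≥ 2) says that `Z` solves the Riccati equation
`2Z² = 2θZ + Z - 3 z₁ X` for the Euler operator `θ = X d/dX`, which multiplies the `n`-th
coefficient by `n`. Applying `θ` to this equation expresses `Z · θ²Z`, whose coefficients are the
weighted sums `Σ j² z j z (n-j)`, through `θ`-derivatives of `Z²` and `X Z`; reading off the
`n`-th coefficient gives the identity. Euler's relation itself is the even part of the Riccati
equation `X B' + X B + B² = B` of the Bernoulli generating function `B = X / (eˣ - 1)`, transported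
to zeta values by `ζ(2k) = -(1/2) (-4π²)ᵏ B₂ₖ / (2k)!`.
-/

open PowerSeries Nat Real

@[simp] theorem Derivation.map_ofNat {R A M : Type*} [CommSemiring R] [CommSemiring A]
    [Algebra R A] [AddCommMonoid M] [Module A M] [Module R M] (D : Derivation R A M) (a : ℕ)
    [a.AtLeastTwo] : D (no_index (OfNat.ofNat a)) = 0 := by
  rw [← Nat.cast_ofNat (R := A)]
  exact D.map_natCast a

theorem Finset.sum_range_two_mul_add_one_of_odd_eq_zero {M : Type*} [AddCommMonoid M] (f : ℕ → M)
    (hf : ∀ j, Odd j → f j = 0) (m : ℕ) :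
    ∑ j ∈ range (2 * m + 1), f j = ∑ k ∈ range (m + 1), f (2 * k) := by
  induction m with
  | zero => simp
  | succ m ih =>
    rw [show 2 * (m + 1) + 1 = 2 * m + 1 + 1 + 1 by ring, sum_range_succ, sum_range_succ, ih,
      hf _ (odd_two_mul_add_one m), sum_range_succ (n := m + 1)]
    simp [mul_add]

noncomputable def PowerSeries.eulerOperator {R : Type*} [CommRing R] :
    Derivation R R⟦X⟧ R⟦X⟧ :=
  (X : R⟦X⟧) • d⁄dX R

local notation "θ" => PowerSeries.eulerOperator

namespace PowerSeries

variable {R : Type*} [CommRing R]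

theorem coeff_eulerOperator (f : R⟦X⟧) (n : ℕ) : coeff n (θ f) = n * coeff n f := by
  rcases n with _ | n
  · simp [eulerOperator]
  · simp only [eulerOperator, Derivation.coe_smul, Pi.smul_apply, smul_eq_mul, coeff_succ_X_mul,
      coeff_derivative, cast_add, cast_one]
    ring

theorem constantCoeff_eulerOperator (f : R⟦X⟧) : constantCoeff (θ f) = 0 := by
  rw [← coeff_zero_eq_constantCoeff_apply, coeff_eulerOperator, Nat.cast_zero, zero_mul]

theorem coeff_ofNat_mul (a : ℕ) [a.AtLeastTwo] (f : R⟦X⟧) (n : ℕ) :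
    coeff n ((no_index (OfNat.ofNat a : R⟦X⟧)) * f) = OfNat.ofNat a * coeff n f := by
  rw [← map_ofNat C, coeff_C_mul]

theorem coeff_mul_eq_sum_Ico {f g : R⟦X⟧} (hf : constantCoeff f = 0)
    (hg : constantCoeff g = 0) (n : ℕ) :
    coeff n (f * g) = ∑ k ∈ Finset.Ico 1 n, coeff k f * coeff (n - k) g := by
  rw [coeff_mul, Finset.Nat.sum_antidiagonal_eq_sum_range_succ_mk]
  refine (Finset.sum_subset (fun k hk => ?_) fun k hk hk' => ?_).symm
  · simp only [Finset.mem_Ico, Finset.mem_range] at hk ⊢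
    omega
  · simp only [Finset.mem_Ico, Finset.mem_range, not_and, not_lt] at hk hk'
    obtain rfl | rfl : k = 0 ∨ k = n := by omega
    · simp [hf]
    · simp [hg]

theorem eulerOperator_sq_mul_of_riccati {Z L : R⟦X⟧} (hL : θ L = L)
    (hZ : 2 * Z ^ 2 = 2 * θ Z + Z - 3 * L) :
    12 * (θ (θ Z) * Z) = 4 * θ (θ (Z ^ 2)) + θ (Z ^ 2) + 18 * (L * Z) - 12 * θ (L * Z) := by
  have hθsq : θ (Z ^ 2) = 2 * Z * θ Z := by
    rw [Derivation.leibniz_pow]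
    simp only [Nat.add_one_sub_one, pow_one, smul_eq_mul, nsmul_eq_mul, cast_ofNat]
    ring
  have hθθsq : θ (θ (Z ^ 2)) = 2 * θ Z ^ 2 + 2 * Z * θ (θ Z) := by
    rw [hθsq, Derivation.leibniz, Derivation.leibniz]
    simp only [smul_eq_mul, Derivation.map_ofNat, mul_zero, add_zero]
    ring
  have hθLZ : θ (L * Z) = L * θ Z + L * Z := by
    rw [Derivation.leibniz, hL, smul_eq_mul, smul_eq_mul]
    ring
  have hθZ : 2 * θ (Z ^ 2) = 2 * θ (θ Z) + θ Z - 3 * L := by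
    simpa [hL] using congrArg θ hZ
  linear_combination (-4) * hθθsq + 12 * hθLZ - 2 * Z * hθZ + (4 * Z - 1) * hθsq + 4 * θ Z * hZ

end PowerSeries

section EulerRelation

variable {K : Type*} [Field K] {z : ℕ → K} {Z : K⟦X⟧}

theorem coeff_sq_eq_sum_Ico (hZ0 : constantCoeff Z = 0) (hZ : ∀ k ≠ 0, coeff k Z = z k)
    (m : ℕ) : coeff m (Z ^ 2) = ∑ k ∈ Finset.Ico 1 m, z k * z (m - k) := by
  rw [sq, coeff_mul_eq_sum_Ico hZ0 hZ0]
  refine Finset.sum_congr rfl fun k hk => ?_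
  rw [Finset.mem_Ico] at hk
  rw [hZ k (by omega), hZ (m - k) (by omega)]

/-- The correction term `C (z 1) * X` accounts for `m = 1`, where Euler's relation fails. -/
theorem riccati_of_sum_Ico_mul [CharZero K] (hZ0 : constantCoeff Z = 0)
    (hZ : ∀ k ≠ 0, coeff k Z = z k)
    (hz : ∀ m, 2 ≤ m → ∑ k ∈ Finset.Ico 1 m, z k * z (m - k) = ((m : K) + 1 / 2) * z m) :
    2 * Z ^ 2 = 2 * θ Z + Z - 3 * (C (z 1) * X) := by
  ext m
  simp only [map_sub, map_add, coeff_ofNat_mul, coeff_eulerOperator, coeff_sq_eq_sum_Ico hZ0 hZ,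
    coeff_C_mul, coeff_X]
  rcases (by omega : m = 0 ∨ m = 1 ∨ 2 ≤ m) with rfl | rfl | hm
  · simp [hZ0]
  · simp only [Finset.Ico_self, Finset.sum_empty, hZ 1 one_ne_zero, ↓reduceIte]
    ring
  · rw [hz m hm, hZ m (by omega), if_neg (by omega)]
    ring

end EulerRelation

theorem sum_Ico_sq_mul_of_sum_Ico_mul {K : Type*} [Field K] [CharZero K] (z : ℕ → K)
    (hz : ∀ m, 2 ≤ m → ∑ k ∈ Finset.Ico 1 m, z k * z (m - k) = ((m : K) + 1 / 2) * z m)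
    (n : ℕ) (hn : 2 ≤ n) :
    ∑ j ∈ Finset.Ico 1 n, (j : K) ^ 2 * z j * z (n - j) =
      ((n : K) * (8 * (n : K) ^ 2 + 6 * n + 1) / 24) * z n -
        ((2 * (n : K) - 3) / 2) * z 1 * z (n - 1) := by
  set Z : K⟦X⟧ := mk fun k => if k = 0 then 0 else z k
  have hZ0 : constantCoeff Z = 0 := by simp [Z, ← coeff_zero_eq_constantCoeff_apply]
  have hZ : ∀ k ≠ 0, coeff k Z = z k := fun k hk => by simp [Z, hk]
  have hL : θ (C (z 1) * X) = C (z 1) * X := by simp [eulerOperator]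
  have hLZ : coeff n (C (z 1) * X * Z) = z 1 * z (n - 1) := by
    obtain ⟨n, rfl⟩ : ∃ n', n = n' + 1 := ⟨n - 1, by omega⟩
    rw [mul_assoc, coeff_C_mul, coeff_succ_X_mul, hZ n (by omega), Nat.add_sub_cancel]
  have key := congrArg (coeff n)
    (eulerOperator_sq_mul_of_riccati hL (riccati_of_sum_Ico_mul hZ0 hZ hz))
  simp only [map_sub, map_add, coeff_ofNat_mul, coeff_eulerOperator, hLZ,
    coeff_sq_eq_sum_Ico hZ0 hZ, coeff_mul_eq_sum_Ico (constantCoeff_eulerOperator _) hZ0,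
    hz n hn] at key
  have hweights : ∑ k ∈ Finset.Ico 1 n, (k : K) * (k * coeff k Z) * coeff (n - k) Z =
      ∑ k ∈ Finset.Ico 1 n, (k : K) ^ 2 * z k * z (n - k) := by
    refine Finset.sum_congr rfl fun k hk => ?_
    rw [Finset.mem_Ico] at hk
    rw [hZ k (by omega), hZ (n - k) (by omega)]
    ring
  rw [hweights] at key
  linear_combination key / 12

theorem bernoulliPowerSeries_riccati (A : Type*) [CommRing A] [Algebra ℚ A] :
    X * d⁄dX A (bernoulliPowerSeries A) + X * bernoulliPowerSeries A +
      bernoulliPowerSeries A ^ 2 = bernoulliPowerSeries A := by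
  set B := bernoulliPowerSeries A
  have hB : B * (exp A - 1) = X := bernoulliPowerSeries_mul_exp_sub_one A
  have hB' : d⁄dX A B * (exp A - 1) + B * exp A = 1 := by
    simpa [Derivation.leibniz, derivative_exp, add_comm, mul_comm] using congrArg (d⁄dX A) hB
  linear_combination B * hB' - (d⁄dX A B + B) * hB

theorem bernoulli_riccati_coeff (N : ℕ) :
    (N + 1) * (bernoulli (N + 1) / (N + 1)!) + bernoulli N / N ! +
      ∑ j ∈ Finset.range (N + 2), bernoulli j / j ! * (bernoulli (N + 1 - j) / (N + 1 - j)!) =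
      bernoulli (N + 1) / (N + 1)! := by
  have h := congrArg (coeff (N + 1)) (bernoulliPowerSeries_riccati ℚ)
  rw [map_add, map_add, coeff_succ_X_mul, coeff_succ_X_mul, coeff_derivative, sq,
    coeff_mul, Finset.Nat.sum_antidiagonal_eq_sum_range_succ_mk] at h
  simpa [bernoulliPowerSeries, mul_comm] using h

theorem bernoulli_div_factorial_eq_zero_of_odd {n : ℕ} (hodd : Odd n) (hn : 1 < n) :
    bernoulli n / n ! = 0 := by
  rw [bernoulli_eq_zero_of_odd hodd hn, zero_div]

theorem sum_Ico_bernoulli_mul_bernoulli {m : ℕ} (hm : 2 ≤ m) :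
    ∑ k ∈ Finset.Ico 1 m, bernoulli (2 * k) / (2 * k)! *
        (bernoulli (2 * (m - k)) / (2 * (m - k))!) =
      -(2 * m + 1) * (bernoulli (2 * m) / (2 * m)!) := by
  have hodd : bernoulli (2 * m - 1) / (2 * m - 1)! = 0 :=
    bernoulli_div_factorial_eq_zero_of_odd ⟨m - 1, by omega⟩ (by omega)
  have heven : ∑ j ∈ Finset.range (2 * m + 1),
      bernoulli j / j ! * (bernoulli (2 * m - j) / (2 * m - j)!) =
      ∑ k ∈ Finset.range (m + 1),
        bernoulli (2 * k) / (2 * k)! * (bernoulli (2 * m - 2 * k) / (2 * m - 2 * k)!) := by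
    refine Finset.sum_range_two_mul_add_one_of_odd_eq_zero _ (fun j hj => ?_) m
    obtain rfl | hj1 := eq_or_ne j 1
    · rw [hodd, mul_zero]
    · rw [bernoulli_div_factorial_eq_zero_of_odd hj (by obtain ⟨r, rfl⟩ := hj; omega), zero_mul]
  have h := bernoulli_riccati_coeff (2 * m - 1)
  rw [show 2 * m - 1 + 1 = 2 * m by omega, show 2 * m - 1 + 2 = 2 * m + 1 by omega, hodd, heven,
    Finset.sum_range_succ, Finset.range_eq_Ico, Finset.sum_eq_sum_Ico_succ_bot (by omega)] at h
  simp only [Nat.sub_self, mul_zero, Nat.sub_zero, bernoulli_zero, factorial_zero] at h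
  simp_rw [Nat.mul_sub]
  push_cast [Nat.cast_sub (by omega : 1 ≤ 2 * m)] at h
  linear_combination h

theorem zetaVal_two_mul {k : ℕ} (hk : k ≠ 0) :
    zetaVal (2 * k) = -(1 / 2) * (-4 * π ^ 2) ^ k * ((bernoulli (2 * k) / (2 * k)! : ℚ) : ℝ) := by
  have h := (hasSum_nat_add_iff' 1).mpr (hasSum_zeta_nat hk)
  norm_num [hk, -one_div] at h
  have hpow : (-4 * π ^ 2) ^ k = (-1) ^ k * 2 ^ (2 * k) * π ^ (2 * k) := by
    rw [pow_mul, pow_mul, ← mul_pow, ← mul_pow]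
    norm_num
  rw [zetaVal, h.tsum_eq, hpow]
  obtain ⟨k, rfl⟩ := Nat.exists_eq_add_one_of_ne_zero hk
  rw [show 2 * (k + 1) - 1 = 2 * k + 1 by omega]
  push_cast
  ring

theorem sum_Ico_zetaVal_mul_zetaVal {m : ℕ} (hm : 2 ≤ m) :
    ∑ k ∈ Finset.Ico 1 m, zetaVal (2 * k) * zetaVal (2 * (m - k)) =
      ((m : ℝ) + 1 / 2) * zetaVal (2 * m) := by
  calc ∑ k ∈ Finset.Ico 1 m, zetaVal (2 * k) * zetaVal (2 * (m - k))
      = 1 / 4 * (-4 * π ^ 2) ^ m * ((∑ k ∈ Finset.Ico 1 m, bernoulli (2 * k) / (2 * k)! *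
          (bernoulli (2 * (m - k)) / (2 * (m - k))!) : ℚ) : ℝ) := by
        rw [Rat.cast_sum, Finset.mul_sum]
        refine Finset.sum_congr rfl fun k hk => ?_
        rw [Finset.mem_Ico] at hk
        rw [zetaVal_two_mul (by omega), zetaVal_two_mul (by omega), Rat.cast_mul,
          ← pow_mul_pow_sub _ hk.2.le]
        ring
    _ = ((m : ℝ) + 1 / 2) * zetaVal (2 * m) := by
        rw [sum_Ico_bernoulli_mul_bernoulli hm, zetaVal_two_mul (by omega)]
        push_cast
        ring

theorem A0_weight2 (n : ℕ) (hn : 2 ≤ n) :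
    ∑ j ∈ Finset.Ico 1 n, (j : ℝ) ^ 2 * zetaVal (2 * j) * zetaVal (2 * (n - j)) =
      ((n : ℝ) * (8 * (n : ℝ) ^ 2 + 6 * (n : ℝ) + 1) / 24) * zetaVal (2 * n) -
        ((2 * (n : ℝ) - 3) / 2) * zetaVal 2 * zetaVal (2 * n - 2) := by
  simpa [Nat.mul_sub_one] using
    sum_Ico_sq_mul_of_sum_Ico_mul (fun k => zetaVal (2 * k))
      (fun _ => sum_Ico_zetaVal_mul_zetaVal) n hn
end
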